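/- arXiv:2403.01326 — 2 statements merged into one kernel-verified Lean document; each statement's English description precedes it below -/
import Mathlib

section
/- Generalization boundedness of weight-sharing NAS (Theorem 1/Theorem 2, full form): Under hypotheses (H1), (H2) and (H3), for every index j ∈ {1,…,T}, the norm of the j-th weight-sharing subnet weight is bounded as ‖ψ₀• + ψⱼ•‖ ≤ sqrt( λ₀‖ψ₀*‖²/λ̃ + (∑_{t=1}^{T} |L_t(ψ₀*) − L_t(ψₜ*)|)/λ̃ ). -/
/-!
The ridge penalty `λ₀‖ψ₀‖² + λ‖ψⱼ‖²` dominates `λ̃‖ψ₀ + ψⱼ‖²` (the parallel sum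
`λ̃ = λ₀λ/(λ₀+λ)` is exactly the constant that makes this sharp). Optimality of the
weight-sharing solution against the universal one bounds its total penalty by
`λ₀‖ψ₀*‖²` plus the loss gap `∑ₜ (Lₜ(ψ₀*) - Lₜ(ψ₀• + ψₜ•))`, and since the stand-alone
losses are smaller, that gap is at most `∑ₜ |Lₜ(ψ₀*) - Lₜ(ψₜ*)|`.
-/

open Finset

theorem mul_div_add_mul_add_sq_le {a b : ℝ} (ha : 0 < a) (hb : 0 < b) (u v : ℝ) :
    a * b / (a + b) * (u + v) ^ 2 ≤ a * u ^ 2 + b * v ^ 2 := by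
  rw [div_mul_eq_mul_div, div_le_iff₀ (by positivity)]
  -- `(a + b)(a u² + b v²) - a b (u + v)² = (a u - b v)²`
  nlinarith [sq_nonneg (a * u - b * v)]

theorem mul_div_add_mul_norm_add_sq_le {E : Type*} [SeminormedAddGroup E]
    {a b : ℝ} (ha : 0 < a) (hb : 0 < b) (x y : E) :
    a * b / (a + b) * ‖x + y‖ ^ 2 ≤ a * ‖x‖ ^ 2 + b * ‖y‖ ^ 2 :=
  calc a * b / (a + b) * ‖x + y‖ ^ 2
      ≤ a * b / (a + b) * (‖x‖ + ‖y‖) ^ 2 := by gcongr; exact norm_add_le x y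
    _ ≤ a * ‖x‖ ^ 2 + b * ‖y‖ ^ 2 := mul_div_add_mul_add_sq_le ha hb _ _

theorem sum_add_le_add_sum_abs_sub {ι : Type*} {s : Finset ι} {f g h r : ι → ℝ} {c d : ℝ}
    (hopt : ∑ i ∈ s, (f i + r i) + c ≤ ∑ i ∈ s, g i + d) (hhf : ∀ i ∈ s, h i ≤ f i) :
    ∑ i ∈ s, r i + c ≤ d + ∑ i ∈ s, |g i - h i| :=
  calc ∑ i ∈ s, r i + c ≤ d + ∑ i ∈ s, (g i - f i) := by
        rw [sum_add_distrib] at hopt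
        rw [sum_sub_distrib]
        linarith
    _ ≤ d + ∑ i ∈ s, |g i - h i| := by
        gcongr with i hi
        exact (sub_le_sub_left (hhf i hi) _).trans (le_abs_self _)

theorem generalization_boundedness_general
    {V : Type*} [NormedAddCommGroup V]
    (T : ℕ)
    (L : ℕ → V → ℝ)
    (l0 l : ℝ) (hl0 : 0 < l0) (hl : 0 < l)
    (ψ₀dot : V) (ψdot : ℕ → V) (ψ₀star : V) (ψstar : ℕ → V)
    (H1 : ∑ t ∈ Finset.Icc 1 T, (L t (ψ₀dot + ψdot t) + l * ‖ψdot t‖ ^ 2)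
            + l0 * ‖ψ₀dot‖ ^ 2
          ≤ ∑ t ∈ Finset.Icc 1 T, L t ψ₀star + l0 * ‖ψ₀star‖ ^ 2)
    (H3 : ∀ t ∈ Finset.Icc 1 T, L t (ψstar t) ≤ L t (ψ₀dot + ψdot t))
    (j : ℕ) (hj : j ∈ Finset.Icc 1 T) :
    ‖ψ₀dot + ψdot j‖
      ≤ Real.sqrt (l0 * ‖ψ₀star‖ ^ 2 / (l0 * l / (l0 + l))
          + (∑ t ∈ Finset.Icc 1 T, |L t ψ₀star - L t (ψstar t)|)
              / (l0 * l / (l0 + l))) := by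
  have hpenalty := mul_div_add_mul_norm_add_sq_le hl0 hl ψ₀dot (ψdot j)
  have htotal := sum_add_le_add_sum_abs_sub H1 H3
  have hsingle : l * ‖ψdot j‖ ^ 2 ≤ ∑ t ∈ Icc 1 T, l * ‖ψdot t‖ ^ 2 :=
    single_le_sum (f := fun t => l * ‖ψdot t‖ ^ 2) (fun _ _ => by positivity) hj
  apply Real.le_sqrt_of_sq_le
  rw [← add_div, le_div_iff₀ (by positivity)]
  linarith

/-- Generalization boundedness of weight-sharing NAS (full form). -/
theorem generalization_boundedness
    {V : Type*} [NormedAddCommGroup V] [InnerProductSpace ℝ V]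
    (T : ℕ) (hT : 1 ≤ T)
    (L : ℕ → V → ℝ) (hL : ∀ t ∈ Finset.Icc 1 T, ∀ ψ : V, 0 ≤ L t ψ)
    (l0 l : ℝ) (hl0 : 0 < l0) (hl : 0 < l)
    (ψ₀dot : V) (ψdot : ℕ → V) (ψ₀star : V) (ψstar : ℕ → V)
    (H1 : ∑ t ∈ Finset.Icc 1 T, (L t (ψ₀dot + ψdot t) + l * ‖ψdot t‖ ^ 2)
            + l0 * ‖ψ₀dot‖ ^ 2
          ≤ ∑ t ∈ Finset.Icc 1 T, L t ψ₀star + l0 * ‖ψ₀star‖ ^ 2)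
    (H2 : ∀ t ∈ Finset.Icc 1 T, ∀ ψ : V,
            L t (ψstar t) + (l0 * l / (l0 + l)) * ‖ψstar t‖ ^ 2
          ≤ L t ψ + (l0 * l / (l0 + l)) * ‖ψ‖ ^ 2)
    (H3 : ∀ t ∈ Finset.Icc 1 T, L t (ψstar t) ≤ L t (ψ₀dot + ψdot t))
    (j : ℕ) (hj : j ∈ Finset.Icc 1 T) :
    ‖ψ₀dot + ψdot j‖
      ≤ Real.sqrt (l0 * ‖ψ₀star‖ ^ 2 / (l0 * l / (l0 + l))
          + (∑ t ∈ Finset.Icc 1 T, |L t ψ₀star - L t (ψstar t)|)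
              / (l0 * l / (l0 + l))) :=
  generalization_boundedness_general T L l0 l hl0 hl ψ₀dot ψdot ψ₀star ψstar H1 H3 j hj
end

section
/- Squared-norm bound (core of inequality ineq-c): Under hypotheses (H1), (H2) and (H3), for every index j ∈ {1,…,T}, λ̃·‖ψ₀• + ψⱼ•‖² ≤ λ₀‖ψ₀*‖² + ∑_{t=1}^{T} |L_t(ψ₀*) − L_t(ψₜ*)|. -/
/-!
Since `(a + b) (a u² + b v²) - a b (u + v)² = (a u - b v)²`, `λ̃ = λ₀λ/(λ₀+λ)` satisfies
`λ̃ ‖x + y‖² ≤ λ₀ ‖x‖² + λ ‖y‖²`, so it suffices to bound the regularization penalty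
of the weight-sharing solution. By (H1) this penalty is at most `λ₀ ‖ψ₀*‖²` plus the loss gap
`∑ₜ (L_t(ψ₀*) - L_t(ψ₀• + ψₜ•))`, and by (H3) each term of that gap is at most
`|L_t(ψ₀*) - L_t(ψₜ*)|`.
-/

open Finset

lemma harmonic_mul_add_sq_le {a b : ℝ} (hab : 0 < a + b) (u v : ℝ) :
    a * b / (a + b) * (u + v) ^ 2 ≤ a * u ^ 2 + b * v ^ 2 := by
  rw [div_mul_eq_mul_div, div_le_iff₀ hab]
  nlinarith [sq_nonneg (a * u - b * v)]

lemma harmonic_mul_norm_add_sq_le {E : Type*} [SeminormedAddCommGroup E] {a b : ℝ}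
    (ha : 0 < a) (hb : 0 < b) (x y : E) :
    a * b / (a + b) * ‖x + y‖ ^ 2 ≤ a * ‖x‖ ^ 2 + b * ‖y‖ ^ 2 :=
  calc a * b / (a + b) * ‖x + y‖ ^ 2
      ≤ a * b / (a + b) * (‖x‖ + ‖y‖) ^ 2 := by
        gcongr
        exact norm_add_le x y
    _ ≤ a * ‖x‖ ^ 2 + b * ‖y‖ ^ 2 := harmonic_mul_add_sq_le (by positivity) _ _

lemma Finset.sum_le_sum_add_sum_abs_sub {ι : Type*} {s : Finset ι} {f g h : ι → ℝ}
    (hgh : ∀ i ∈ s, g i ≤ h i) :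
    ∑ i ∈ s, f i ≤ ∑ i ∈ s, h i + ∑ i ∈ s, |f i - g i| := by
  rw [← sum_add_distrib]
  exact sum_le_sum fun i hi => by linarith [hgh i hi, le_abs_self (f i - g i)]

theorem squared_norm_bound_general
    {V : Type*} [NormedAddCommGroup V] [InnerProductSpace ℝ V]
    (T : ℕ)
    (L : ℕ → V → ℝ)
    (l0 l : ℝ) (hl0 : 0 < l0) (hl : 0 < l)
    (ψ₀dot : V) (ψdot : ℕ → V) (ψ₀star : V) (ψstar : ℕ → V)
    (H1 : ∑ t ∈ Finset.Icc 1 T, (L t (ψ₀dot + ψdot t) + l * ‖ψdot t‖ ^ 2)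
            + l0 * ‖ψ₀dot‖ ^ 2
          ≤ ∑ t ∈ Finset.Icc 1 T, L t ψ₀star + l0 * ‖ψ₀star‖ ^ 2)
    (H3 : ∀ t ∈ Finset.Icc 1 T, L t (ψstar t) ≤ L t (ψ₀dot + ψdot t))
    (j : ℕ) (hj : j ∈ Finset.Icc 1 T) :
    (l0 * l / (l0 + l)) * ‖ψ₀dot + ψdot j‖ ^ 2
      ≤ l0 * ‖ψ₀star‖ ^ 2 + ∑ t ∈ Finset.Icc 1 T, |L t ψ₀star - L t (ψstar t)| := by
  have loss_gap := sum_le_sum_add_sum_abs_sub (f := fun t => L t ψ₀star) H3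
  have penalty_bound : l0 * ‖ψ₀dot‖ ^ 2 + ∑ t ∈ Icc 1 T, l * ‖ψdot t‖ ^ 2
      ≤ l0 * ‖ψ₀star‖ ^ 2 + ∑ t ∈ Icc 1 T, |L t ψ₀star - L t (ψstar t)| := by
    rw [sum_add_distrib] at H1
    linarith
  calc l0 * l / (l0 + l) * ‖ψ₀dot + ψdot j‖ ^ 2
      ≤ l0 * ‖ψ₀dot‖ ^ 2 + l * ‖ψdot j‖ ^ 2 := harmonic_mul_norm_add_sq_le hl0 hl _ _
    _ ≤ l0 * ‖ψ₀dot‖ ^ 2 + ∑ t ∈ Icc 1 T, l * ‖ψdot t‖ ^ 2 := by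
        gcongr
        exact single_le_sum (f := fun t => l * ‖ψdot t‖ ^ 2) (fun t _ => by positivity) hj
    _ ≤ _ := penalty_bound

/-- Squared-norm bound (core of inequality ineq-c). -/
theorem squared_norm_bound
    {V : Type*} [NormedAddCommGroup V] [InnerProductSpace ℝ V]
    (T : ℕ) (hT : 1 ≤ T)
    (L : ℕ → V → ℝ) (hL : ∀ t ∈ Finset.Icc 1 T, ∀ ψ : V, 0 ≤ L t ψ)
    (l0 l : ℝ) (hl0 : 0 < l0) (hl : 0 < l)
    (ψ₀dot : V) (ψdot : ℕ → V) (ψ₀star : V) (ψstar : ℕ → V)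
    (H1 : ∑ t ∈ Finset.Icc 1 T, (L t (ψ₀dot + ψdot t) + l * ‖ψdot t‖ ^ 2)
            + l0 * ‖ψ₀dot‖ ^ 2
          ≤ ∑ t ∈ Finset.Icc 1 T, L t ψ₀star + l0 * ‖ψ₀star‖ ^ 2)
    (H2 : ∀ t ∈ Finset.Icc 1 T, ∀ ψ : V,
            L t (ψstar t) + (l0 * l / (l0 + l)) * ‖ψstar t‖ ^ 2
          ≤ L t ψ + (l0 * l / (l0 + l)) * ‖ψ‖ ^ 2)
    (H3 : ∀ t ∈ Finset.Icc 1 T, L t (ψstar t) ≤ L t (ψ₀dot + ψdot t))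
    (j : ℕ) (hj : j ∈ Finset.Icc 1 T) :
    (l0 * l / (l0 + l)) * ‖ψ₀dot + ψdot j‖ ^ 2
      ≤ l0 * ‖ψ₀star‖ ^ 2 + ∑ t ∈ Finset.Icc 1 T, |L t ψ₀star - L t (ψstar t)| :=
  squared_norm_bound_general T L l0 l hl0 hl ψ₀dot ψdot ψ₀star ψstar H1 H3 j hj
end
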